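/- Let C be a Grothendieck category with generator G that is κ(G)-presentable (κ(G) infinite regular), such that epimorphisms M ↠ M'' satisfy |C(G,M'')| ≤ |C(G,M)|. Let U : C → C be a colimit-preserving endofunctor. Then, setting λ^U := |C(G,UG)|^{κ(G)} × κ(G)^{κ(G)}, for every object M of C one has |C(G,UM)| ≤ λ^U × |C(G,M)|^{κ(G)}. -/

import Mathlib

open CategoryTheory CategoryTheory.Limits Opposite

universe w v u u₂ v₂

namespace Paper

variable {C : Type u} [Category.{v} C]

/-- A partially ordered set `J` is `κ`-directed if every subset of cardinality `< κ`
has an upper bound. -/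
def IsKappaDirected (κ : Cardinal.{v}) (J : Type v) [Preorder J] : Prop :=
  ∀ S : Set J, Cardinal.mk S < κ → ∃ j : J, ∀ s ∈ S, s ≤ j

/-- An object `M` is `κ`-presentable if `C(M,-)` preserves colimits of
`κ`-directed diagrams. -/
def IsPresentable (κ : Cardinal.{v}) (M : C) : Prop :=
  ∀ (J : Type v) [PartialOrder J], IsKappaDirected κ J →
    PreservesColimitsOfShape J (coyoneda.obj (op M))

/-- A category is locally `κ`-presentable if it is cocomplete and has a small
separating family of `κ`-presentable objects. -/
def IsLocallyKappaPresentable (κ : Cardinal.{v₂}) (A : Type u₂) [Category.{v₂} A] : Prop :=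
  ∃ (_ : HasColimits A) (S : Set A), Small.{v₂} S ∧ (∀ M ∈ S, IsPresentable κ M) ∧
    ObjectProperty.IsSeparating (fun X : A => X ∈ S)

/-- A category is locally presentable if it is locally `κ`-presentable for some
regular cardinal `κ`. -/
def IsLocallyPresentable (A : Type u₂) [Category.{v₂} A] : Prop :=
  ∃ κ : Cardinal.{v₂}, κ.IsRegular ∧ IsLocallyKappaPresentable κ A

/-- Filtered colimits exist when all colimits do. -/
def hasFilteredOfHasColimits {A : Type u₂} [Category.{v₂} A] (hc : HasColimits A) :
    HasFilteredColimits A :=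
  ⟨fun I _ _ => hc.has_colimits_of_shape I⟩

/-- A Grothendieck category: abelian, cocomplete, AB5, with a generator. -/
def IsGrothendieckCategory (A : Type u₂) [Category.{v₂} A] : Prop :=
  ∃ (_ : Abelian A) (hc : HasColimits A),
    @AB5 A _ (hasFilteredOfHasColimits hc) ∧ ∃ G : A, IsSeparator G

section MonadQuiver

variable {Q : Type v} [SmallCategory Q] (𝒰 : Q ⥤ Monad C)

/-- A module over a monad quiver `𝒰 : Q ⥤ Mnd(C)`: a family of Eilenberg-Moore
algebras `pt x ∈ EM_{𝒰 x}` together with compatible structure morphisms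
`pt x ⟶ (𝒰 φ)_* (pt y)` for each arrow `φ : x ⟶ y`. -/
structure UMod where
  pt : ∀ x : Q, (𝒰.obj x).Algebra
  tr : ∀ {x y : Q}, (x ⟶ y) → ((pt x).A ⟶ (pt y).A)
  compat : ∀ {x y : Q} (φ : x ⟶ y),
    (𝒰.obj x).toFunctor.map (tr φ) ≫ ((𝒰.map φ).app (pt y).A ≫ (pt y).a) =
      (pt x).a ≫ tr φ
  tr_id : ∀ x : Q, tr (𝟙 x) = 𝟙 (pt x).A
  tr_comp : ∀ {x y z : Q} (φ : x ⟶ y) (ψ : y ⟶ z), tr (φ ≫ ψ) = tr φ ≫ tr ψ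

variable {𝒰}

/-- Morphisms of modules over a monad quiver. -/
structure UModHom (M N : UMod 𝒰) where
  app : ∀ x : Q, (M.pt x).A ⟶ (N.pt x).A
  halg : ∀ x : Q,
    (𝒰.obj x).toFunctor.map (app x) ≫ (N.pt x).a = (M.pt x).a ≫ app x
  hcomm : ∀ {x y : Q} (φ : x ⟶ y), M.tr φ ≫ app y = app x ≫ N.tr φ

theorem UModHom.ext' {M N : UMod 𝒰} {f g : UModHom M N} (h : f.app = g.app) : f = g := by
  cases f; cases g; cases h; rfl

instance : Category (UMod 𝒰) where
  Hom := UModHom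
  id M :=
    { app := fun x => 𝟙 _
      halg := fun x => by simp
      hcomm := fun φ => by simp }
  comp {M N P} f g :=
    { app := fun x => f.app x ≫ g.app x
      halg := fun x => by
        rw [Functor.map_comp, Category.assoc, g.halg x, ← Category.assoc, f.halg x,
          Category.assoc]
      hcomm := fun φ => by
        rw [← Category.assoc, f.hcomm φ, Category.assoc, g.hcomm φ, ← Category.assoc] }
  id_comp f := UModHom.ext' (by funext x; exact Category.id_comp _)
  comp_id f := UModHom.ext' (by funext x; exact Category.comp_id _)
  assoc f g h := UModHom.ext' (by funext x; exact Category.assoc _ _ _)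

variable (𝒰)

/-- Evaluation of a `𝒰`-module at a vertex `x`. -/
def ev (x : Q) : UMod 𝒰 ⥤ (𝒰.obj x).Algebra where
  obj M := M.pt x
  map f := { f := f.app x, h := f.halg x }
  map_id _ := rfl
  map_comp _ _ := rfl

variable {𝒰}

/-- The structure morphism of a module, as a morphism `pt x ⟶ φ_* (pt y)` of
Eilenberg-Moore algebras. -/
def UMod.trHom (M : UMod 𝒰) {x y : Q} (φ : x ⟶ y) :
    M.pt x ⟶ (Monad.algebraFunctorOfMonadHom (𝒰.map φ)).obj (M.pt y) :=
  { f := M.tr φ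
    h := M.compat φ }

/-- `M` is cartesian at the edge `φ : x ⟶ y` if the structure morphism
`pt x ⟶ φ_* (pt y)` is a universal arrow; equivalently the adjoint transpose
`φ^* (pt x) ⟶ pt y` is an isomorphism. -/
def IsCartesianAt (M : UMod 𝒰) {x y : Q} (φ : x ⟶ y) : Prop :=
  ∀ (N : (𝒰.obj y).Algebra) (g : M.pt x ⟶ (Monad.algebraFunctorOfMonadHom (𝒰.map φ)).obj N),
    ∃! h : M.pt y ⟶ N,
      M.trHom φ ≫ (Monad.algebraFunctorOfMonadHom (𝒰.map φ)).map h = g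

end MonadQuiver

/-- `P` together with `η : M ⟶ φ_* P` is a reflection of `M` along restriction of
scalars, i.e. `η` exhibits `P` as `φ^* M`. -/
def IsExtension {T₁ T₂ : Monad C} (φ : T₁ ⟶ T₂) (M : T₁.Algebra) (P : T₂.Algebra)
    (η : M ⟶ (Monad.algebraFunctorOfMonadHom φ).obj P) : Prop :=
  ∀ (N : T₂.Algebra) (g : M ⟶ (Monad.algebraFunctorOfMonadHom φ).obj N),
    ∃! h : P ⟶ N, η ≫ (Monad.algebraFunctorOfMonadHom φ).map h = g

/-- A monad morphism `φ` is flat if the left adjoint `φ^*` of the restriction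
functor `φ_*` is exact. -/
def IsFlatMonadHom {T₁ T₂ : Monad C} (φ : T₁ ⟶ T₂) : Prop :=
  ∀ (L : T₁.Algebra ⥤ T₂.Algebra),
    Nonempty (L ⊣ Monad.algebraFunctorOfMonadHom φ) → PreservesFiniteLimits L

/-!
Cover `M` by the copower `∐_{C(G,M)} G`; by the hypothesis on epimorphisms it suffices to bound
the maps from `G` into `U` of this copower. The copower is the `κ`-directed colimit of its
subcopowers `∐_A G` over the `κ`-small subsets `A ⊆ C(G,M)`, and both `U` and, by presentability,
`C(G, -)` preserve this colimit, so every such map factors through some `U(∐_A G) ≅ ∐_A UG`.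
By AB5 the projections of a coproduct are jointly monic, so `C(G, ∐_A UG)` embeds into
`C(G, UG)^A`. Finally there are at most `|C(G,M)|^κ κ^κ` subsets `A`.
-/

section Subcoproducts

variable [HasCoproducts.{v} C] {τ : Type v} (f : τ → C) (p : Set τ → Prop)

noncomputable abbrev subcoproductDiagram : Subtype p ⥤ C where
  obj A := ∐ fun a : A.1 => f a
  map {A B} h := Sigma.desc fun a => Sigma.ι (fun b : B.1 => f b) ⟨a.1, leOfHom h a.2⟩

noncomputable abbrev subcoproductCocone : Cocone (subcoproductDiagram f p) where
  pt := ∐ f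
  ι :=
    { app A := Sigma.desc fun a => Sigma.ι f a.1
      naturality _ _ _ := Sigma.hom_ext _ _ fun _ => by simp }

noncomputable def isColimitSubcoproductCocone (hp : ∀ t, p {t}) :
    IsColimit (subcoproductCocone f p) where
  desc s := Sigma.desc fun t =>
    Sigma.ι (fun a : ({t} : Set τ) => f a) ⟨t, rfl⟩ ≫ s.ι.app ⟨{t}, hp t⟩
  fac s A := Sigma.hom_ext _ _ fun a => by
    have hw := s.w (homOfLE (Set.singleton_subset_iff.2 a.2) :
      (⟨{a.1}, hp a.1⟩ : Subtype p) ⟶ A)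
    simp only [Sigma.ι_desc_assoc, Sigma.ι_desc]
    rw [← hw]
    simp
  uniq s m hm := Sigma.hom_ext _ _ fun t => by
    simp only [← hm, Sigma.ι_desc_assoc, Sigma.ι_desc]

theorem subcoproductCocone_ι_app_π [HasZeroMorphisms C] [DecidableEq τ] (A : Subtype p)
    (a : A.1) :
    (subcoproductCocone f p).ι.app A ≫ Sigma.π f a = Sigma.π (fun a : A.1 => f a) a :=
  Sigma.hom_ext _ _ fun b => by
    simp only [Sigma.ι_desc_assoc, Sigma.ι_π]
    by_cases h : b = a
    · subst h; simp
    · rw [dif_neg h, dif_neg (Subtype.coe_ne_coe.2 h)]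

end Subcoproducts

theorem sum_sigma_π_ι [Preadditive C] {β : Type w} [Fintype β] [DecidableEq β] (f : β → C)
    [HasCoproduct f] : ∑ b, Sigma.π f b ≫ Sigma.ι f b = 𝟙 (∐ f) :=
  Sigma.hom_ext _ _ fun b => by
    rw [Preadditive.comp_sum, Finset.sum_eq_single b]
    · simp
    · intro c _ hc
      rw [Sigma.ι_π_of_ne_assoc _ (Ne.symm hc), zero_comp]
    · simp

theorem sigma_eq_zero_of_forall_π_of_finite [Preadditive C] {β : Type w} [Finite β]
    [DecidableEq β] {f : β → C} [HasCoproduct f] {X : C} {g : X ⟶ ∐ f}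
    (hg : ∀ b, g ≫ Sigma.π f b = 0) : g = 0 := by
  have := Fintype.ofFinite β
  rw [← Category.comp_id g, ← sum_sigma_π_ι, Preadditive.comp_sum]
  simp [reassoc_of% hg]

/- `∐ f` is the filtered colimit of its finite subcoproducts, which are biproducts; AB5 lets us
test the vanishing of `g` after pulling it back to each of them. -/
theorem sigma_eq_zero_of_forall_π [Abelian C] [HasColimits C] [AB5 C] {α : Type v}
    [DecidableEq α] {f : α → C} {X : C} {g : X ⟶ ∐ f} (hg : ∀ a, g ≫ Sigma.π f a = 0) :
    g = 0 := by
  let p : Set α → Prop := Set.Finite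
  have : IsDirected (Subtype p) (· ≤ ·) := ⟨fun A B =>
    ⟨⟨A.1 ∪ B.1, A.2.union B.2⟩, Set.subset_union_left, Set.subset_union_right⟩⟩
  have : Nonempty (Subtype p) := ⟨⟨∅, Set.finite_empty⟩⟩
  have : IsConnected (Subtype p) := IsFiltered.isConnected _
  have hc := isColimitSubcoproductCocone f p Set.finite_singleton
  simpa using hc.pullback_zero_ext (f := g) (g := 𝟙 _) fun A => by
    have : Finite A.1 := A.2
    have hfst : pullback.fst ((subcoproductCocone f p).ι.app A) g = 0 :=
      sigma_eq_zero_of_forall_π_of_finite fun a => by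
        rw [← subcoproductCocone_ι_app_π, pullback.condition_assoc, hg, comp_zero]
    rw [← pullback.condition_assoc, hfst, zero_comp]

open Cardinal CardinalDirectedPoset

theorem mk_hom_sigma_le_prod [Abelian C] [HasColimits C] [AB5 C] {α : Type v} (f : α → C)
    (X : C) : #(X ⟶ ∐ f) ≤ Cardinal.prod fun a => #(X ⟶ f a) := by
  classical
  refine (mk_le_of_injective (f := fun g a => g ≫ Sigma.π f a) fun g h hgh => ?_).trans_eq
    (mk_pi _)
  refine sub_eq_zero.1 (sigma_eq_zero_of_forall_π fun a => ?_)
  rw [Preadditive.sub_comp, sub_eq_zero]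
  exact congr_fun hgh a

theorem Types.mk_pt_le_sum_of_isColimit {J : Type v} [SmallCategory J] {F : J ⥤ Type v}
    {c : Cocone F} (hc : IsColimit c) : #c.pt ≤ sum fun j => #(F.obj j) :=
  (mk_le_of_surjective (f := fun x : Σ j, F.obj j => c.ι.app x.1 x.2) fun x =>
    let ⟨j, y, hy⟩ := Types.jointly_surjective F hc x; ⟨⟨j, y⟩, hy⟩).trans_eq (mk_sigma _)

theorem isKappaDirected_setCardinalLT (κ : Cardinal.{v}) [Fact κ.IsRegular] (τ : Type v) :
    IsKappaDirected κ (SetCardinalLT κ τ) := fun S hS =>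
  ⟨⟨⋃ A : S, A.1.1, hasCardinalLT_iUnion _ ((hasCardinalLT_iff_cardinal_mk_lt _ _).2 hS)
    fun A => A.1.2⟩, fun A hA => Set.subset_iUnion (fun A : S => A.1.1) ⟨A, hA⟩⟩

theorem mk_setCardinalLT_le {κ : Cardinal.{v}} (hκ : ℵ₀ ≤ κ) (τ : Type v) [Nonempty τ] :
    #(SetCardinalLT κ τ) ≤ #τ ^ κ * κ ^ κ := by
  have hκ0 : κ ≠ 0 := (aleph0_pos.trans_le hκ).ne'
  calc #(SetCardinalLT κ τ) ≤ #{A : Set τ // #A ≤ κ} :=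
        mk_le_of_injective (f := Subtype.map id fun A hA =>
          ((hasCardinalLT_iff_cardinal_mk_lt _ _).1 hA).le)
          fun A B h => Subtype.ext (congrArg Subtype.val h :)
    _ ≤ max #τ ℵ₀ ^ κ := mk_bounded_set_le τ κ
    _ ≤ (#τ * κ) ^ κ := power_le_power_right (max_le (le_mul_right hκ0)
        (hκ.trans (le_mul_left (mk_ne_zero τ))))
    _ = #τ ^ κ * κ ^ κ := mul_power

theorem mk_hom_sigma_const_le [Abelian C] [HasColimits C] [AB5 C] (X Y : C) (τ : Type v) :
    #(X ⟶ ∐ fun _ : τ => Y) ≤ #(X ⟶ Y) ^ #τ :=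
  (mk_hom_sigma_le_prod _ X).trans_eq (prod_const' τ _)

theorem mk_hom_obj_sigma_const_le [Abelian C] [HasColimits C] [AB5 C] {G : C}
    {κ : Cardinal.{v}} [Fact κ.IsRegular] (hG : IsPresentable κ G) (U : C ⥤ C)
    [PreservesColimits U] (X : C) (τ : Type v) :
    #(G ⟶ U.obj (∐ fun _ : τ => X)) ≤ #(SetCardinalLT κ τ) * #(G ⟶ U.obj X) ^ κ := by
  have := hG _ (isKappaDirected_setCardinalLT κ τ)
  have hc := isColimitOfPreserves (U ⋙ coyoneda.obj (op G))
    (isColimitSubcoproductCocone (fun _ : τ => X) (fun A => HasCardinalLT A κ)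
      fun t => (SetCardinalLT.singleton κ t).2)
  have stage (A : SetCardinalLT κ τ) :
      #(G ⟶ U.obj (∐ fun _ : A.1 => X)) ≤ #(G ⟶ U.obj X) ^ κ :=
    calc #(G ⟶ U.obj (∐ fun _ : A.1 => X))
        = #(G ⟶ ∐ fun _ : A.1 => U.obj X) :=
          mk_congr ((Iso.refl G).homCongr (PreservesCoproduct.iso U _))
      _ ≤ #(G ⟶ U.obj X) ^ #A.1 := mk_hom_sigma_const_le _ _ _
      _ ≤ #(G ⟶ U.obj X) ^ κ := power_le_power_left (mk_ne_zero_iff.2 ⟨0⟩)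
          ((hasCardinalLT_iff_cardinal_mk_lt _ _).1 A.2).le
  calc #(G ⟶ U.obj (∐ fun _ : τ => X))
      ≤ sum fun A : SetCardinalLT κ τ => #(G ⟶ U.obj (∐ fun _ : A.1 => X)) :=
        Types.mk_pt_le_sum_of_isColimit hc
    _ ≤ sum fun _ : SetCardinalLT κ τ => #(G ⟶ U.obj X) ^ κ := sum_le_sum _ _ stage
    _ = #(SetCardinalLT κ τ) * #(G ⟶ U.obj X) ^ κ := sum_const' _ _

/-- the modulus-like bound on a colimit-preserving endofunctor
(Theorem 2.2). -/
theorem norm_endofunctor_le {C : Type u} [Category.{v} C] [Abelian C] [HasColimits C] [AB5 C]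
    (G : C) (hG : IsSeparator G) (κG : Cardinal.{v}) (hreg : κG.IsRegular)
    (hpres : IsPresentable κG G)
    (hepi : ∀ {X Y : C} (f : X ⟶ Y), Epi f → Cardinal.mk (G ⟶ Y) ≤ Cardinal.mk (G ⟶ X))
    (U : C ⥤ C) [PreservesColimits U] (M : C) :
    Cardinal.mk (G ⟶ U.obj M) ≤
      (Cardinal.mk (G ⟶ U.obj G) ^ κG * κG ^ κG) * Cardinal.mk (G ⟶ M) ^ κG := by
  have : Fact κG.IsRegular := ⟨hreg⟩
  have : Nonempty (G ⟶ M) := ⟨0⟩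
  have : Epi (Sigma.desc fun f : G ⟶ M => f) := (isSeparator_iff_epi G).1 hG M
  calc #(G ⟶ U.obj M)
      ≤ #(G ⟶ U.obj (∐ fun _ : G ⟶ M => G)) :=
        hepi _ (U.map_epi (Sigma.desc fun f => f))
    _ ≤ #(SetCardinalLT κG (G ⟶ M)) * #(G ⟶ U.obj G) ^ κG :=
        mk_hom_obj_sigma_const_le hpres U G _
    _ ≤ (#(G ⟶ M) ^ κG * κG ^ κG) * #(G ⟶ U.obj G) ^ κG :=
        mul_le_mul_left (mk_setCardinalLT_le hreg.aleph0_le _) _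
    _ = (#(G ⟶ U.obj G) ^ κG * κG ^ κG) * #(G ⟶ M) ^ κG := by ring

end Paper
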